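/- The diagonal special Hermite functions satisfy the Laguerre representation: for \beta in N^d and (x, \xi) in R^d x R^d, \Phi_{\beta,\beta}(x,\xi) = (2\pi)^{-d} \prod_{j=1}^d L_{\beta_j}^0((x_j^2 + \xi_j^2)/2) exp(-(x_j^2 + \xi_j^2)/4). -/

import Mathlib

open MeasureTheory Real

noncomputable section

/-- Euclidean dot product on `ℝ^d`. -/
def dotp {d : ℕ} (x y : Fin d → ℝ) : ℝ := ∑ j, x j * y j

/-- Ambiguity transform
`A(f,g)(x,ξ) = (2π)^{-d} ∫ e^{-iξ·y} f(y+x/2) conj(g(y-x/2)) dy`. -/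
def ambiguity {d : ℕ} (f g : (Fin d → ℝ) → ℂ) (p : (Fin d → ℝ) × (Fin d → ℝ)) : ℂ :=
  ((((2 * π : ℝ)) ^ d)⁻¹ : ℝ) *
    ∫ y : Fin d → ℝ, Complex.exp (-Complex.I * (dotp p.2 y : ℝ)) *
      f (y + (1 / 2 : ℝ) • p.1) * (starRingEnd ℂ) (g (y - (1 / 2 : ℝ) • p.1))

/-- Hermite polynomial. -/
def hermitePoly (n : ℕ) (y : ℝ) : ℝ :=
  (-1 : ℝ) ^ n * Real.exp (y ^ 2) * iteratedDeriv n (fun t => Real.exp (-t ^ 2)) y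

/-- Normalized one-dimensional Hermite function. -/
def hermiteFun (n : ℕ) (y : ℝ) : ℝ :=
  ((2 : ℝ) ^ n * (n.factorial : ℝ) * Real.sqrt π) ^ (-(1 : ℝ) / 2) *
    Real.exp (-y ^ 2 / 2) * hermitePoly n y

/-- `d`-dimensional Hermite function. -/
def hermiteFunD {d : ℕ} (α : Fin d → ℕ) (x : Fin d → ℝ) : ℂ :=
  ((∏ j, hermiteFun (α j) (x j) : ℝ) : ℂ)

/-- Special Hermite function `Φ_{α,β}(z) = A(Φ_α, Φ_β)(Jz)`, where `J(x,ξ) = (ξ,-x)`. -/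
def specialHermite {d : ℕ} (α β : Fin d → ℕ)
    (z : (Fin d → ℝ) × (Fin d → ℝ)) : ℂ :=
  ambiguity (hermiteFunD α) (hermiteFunD β) (z.2, -z.1)

/-- Laguerre polynomial of integer type `δ` and degree `n`. -/
def laguerre (δ n : ℕ) (y : ℝ) : ℝ :=
  ∑ i ∈ Finset.range (n + 1),
    (-1 : ℝ) ^ i * ((n + δ).choose (n - i) : ℝ) * y ^ i / (i.factorial : ℝ)


section Aux

open Polynomial Filter Topology Complex Finset

/-- Physicists' Hermite polynomial via recurrence. -/
def Hp : ℕ → Polynomial ℝ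
  | 0 => 1
  | n + 1 => Polynomial.C 2 * Polynomial.X * Hp n - Polynomial.derivative (Hp n)

lemma Hp_deriv : ∀ n : ℕ, Polynomial.derivative (Hp (n + 1)) = Polynomial.C ((2 : ℝ) * (n + 1)) * Hp n
  | 0 => by
    apply Polynomial.funext; intro y
    simp [Hp]
  | n + 1 => by
    have ih := Hp_deriv n
    apply Polynomial.funext; intro y
    rw [show Hp (n + 2) = Polynomial.C 2 * Polynomial.X * Hp (n+1) - Polynomial.derivative (Hp (n+1)) from rfl]
    simp only [Polynomial.derivative_sub, Polynomial.derivative_mul, Polynomial.derivative_C,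
      Polynomial.derivative_X, ih]
    simp only [Polynomial.derivative_mul, Polynomial.derivative_C, Polynomial.eval_sub,
      Polynomial.eval_add, Polynomial.eval_mul, Polynomial.eval_C, Polynomial.eval_X,
      Polynomial.eval_one, Polynomial.eval_zero]
    rw [show Hp (n + 1) = Polynomial.C 2 * Polynomial.X * Hp n - Polynomial.derivative (Hp n) from rfl]
    simp only [Polynomial.eval_sub, Polynomial.eval_mul, Polynomial.eval_C, Polynomial.eval_X]
    push_cast
    ring

lemma iteratedDeriv_gauss (n : ℕ) :
    iteratedDeriv n (fun t => Real.exp (-t ^ 2)) =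
      fun y => (-1 : ℝ) ^ n * (Hp n).eval y * Real.exp (-y ^ 2) := by
  induction n with
  | zero => funext y; simp [Hp]
  | succ n ih =>
    funext y
    rw [iteratedDeriv_succ, ih]
    have h1 : HasDerivAt (fun y : ℝ => (-1 : ℝ) ^ n * (Hp n).eval y * Real.exp (-y ^ 2))
        ((-1:ℝ)^n * ((Polynomial.derivative (Hp n)).eval y * Real.exp (-y^2) +
          (Hp n).eval y * (Real.exp (-y^2) * (-2*y)))) y := by
      have hp := (Hp n).hasDerivAt y
      have he : HasDerivAt (fun y : ℝ => Real.exp (-y ^ 2)) (Real.exp (-y^2) * (-2*y)) y := by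
        have : HasDerivAt (fun y : ℝ => -y ^ 2) (-2*y) y := by
          simpa [Pi.neg_def] using ((hasDerivAt_pow 2 y).neg)
        simpa using this.exp
      simpa [mul_assoc, mul_add] using ((hp.mul he).const_mul ((-1:ℝ)^n))
    rw [h1.deriv]
    rw [show Hp (n + 1) = Polynomial.C 2 * Polynomial.X * Hp n - Polynomial.derivative (Hp n) from rfl]
    simp only [Polynomial.eval_sub, Polynomial.eval_mul, Polynomial.eval_C, Polynomial.eval_X]
    ring

lemma hermitePoly_eq (n : ℕ) (y : ℝ) : hermitePoly n y = (Hp n).eval y := by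
  have h := congrFun (iteratedDeriv_gauss n) y
  rw [hermitePoly, h, Real.exp_neg]
  have he := Real.exp_ne_zero (y^2)
  field_simp
  ring_nf
  rw [mul_comm n 2, pow_mul]
  norm_num


lemma abs_pow_le (i : ℕ) (y : ℝ) : |y| ^ i ≤ (i.factorial : ℝ) * Real.exp |y| := by
  have h := Real.pow_div_factorial_le_exp |y| (abs_nonneg y) i
  have hf : (0:ℝ) < (i.factorial : ℝ) := by positivity
  rw [div_le_iff₀ hf] at h
  calc |y| ^ i ≤ Real.exp |y| * (i.factorial : ℝ) := h
    _ = (i.factorial : ℝ) * Real.exp |y| := by ring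

lemma re_neg_sq (c : ℂ) (y : ℝ) : (-((y:ℂ) + c)^2).re = -(y + c.re)^2 + c.im^2 := by
  simp [pow_two, Complex.mul_re]
  ring

lemma key_bound (c : ℂ) (S : Polynomial ℂ) :
    ∃ C : ℝ, 0 ≤ C ∧ ∀ y : ℝ, ‖Complex.exp (-((y:ℂ) + c)^2) * S.eval (y:ℂ)‖ ≤
      C * Real.exp (-(y + c.re)^2 / 4) := by
  set A : ℝ := ∑ i ∈ Finset.range (S.natDegree + 1), ‖S.coeff i‖ * (i.factorial : ℝ) with hA
  have hAnn : (0:ℝ) ≤ A := by rw [hA]; positivity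
  refine ⟨A * Real.exp (c.im^2 + |c.re| + 1/3), by positivity, fun y => ?_⟩
  have hnorm : ‖Complex.exp (-((y:ℂ) + c)^2)‖ = Real.exp (-(y + c.re)^2 + c.im^2) := by
    rw [Complex.norm_exp, re_neg_sq]
  have hS : ‖S.eval (y:ℂ)‖ ≤ A * Real.exp |y| := by
    rw [Polynomial.eval_eq_sum_range]
    refine le_trans (norm_sum_le _ _) ?_
    rw [hA, Finset.sum_mul]
    apply Finset.sum_le_sum
    intro i _
    rw [norm_mul, norm_pow, mul_assoc]
    apply mul_le_mul_of_nonneg_left ?_ (norm_nonneg _)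
    have hy : ‖(y:ℂ)‖ = |y| := by simp [Complex.norm_real]
    rw [hy]
    exact abs_pow_le i y
  calc ‖Complex.exp (-((y:ℂ) + c)^2) * S.eval (y:ℂ)‖
      = Real.exp (-(y + c.re)^2 + c.im^2) * ‖S.eval (y:ℂ)‖ := by rw [norm_mul, hnorm]
    _ ≤ Real.exp (-(y + c.re)^2 + c.im^2) * (A * Real.exp |y|) := by
        apply mul_le_mul_of_nonneg_left hS (Real.exp_nonneg _)
    _ = A * Real.exp ((-(y + c.re)^2 + c.im^2) + |y|) := by
        rw [mul_left_comm, ← Real.exp_add]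
    _ ≤ A * Real.exp ((c.im^2 + |c.re| + 1/3) + (-(y + c.re)^2/4)) := by
        apply mul_le_mul_of_nonneg_left ?_ hAnn
        apply Real.exp_le_exp.2
        have h1 : |y| ≤ |y + c.re| + |c.re| := by
          calc |y| = |(y + c.re) + (-c.re)| := by ring_nf
            _ ≤ |y + c.re| + |(-c.re)| := abs_add_le _ _
            _ = |y + c.re| + |c.re| := by rw [abs_neg]
        have h2 : |y + c.re| - (3/4) * (y + c.re)^2 ≤ 1/3 := by
          have htn : 0 ≤ |y + c.re| := abs_nonneg _
          have hsq : (y + c.re)^2 = |y + c.re|^2 := (_root_.sq_abs _).symm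
          rw [hsq]
          nlinarith [sq_nonneg (|y + c.re| - 2/3)]
        nlinarith [h1, h2]
    _ = A * Real.exp (c.im^2 + |c.re| + 1/3) * Real.exp (-(y + c.re)^2/4) := by
        rw [Real.exp_add]; ring


lemma cont_aux (c : ℂ) (S : Polynomial ℂ) :
    Continuous (fun y : ℝ => Complex.exp (-((y:ℂ) + c)^2) * S.eval (y:ℂ)) := by
  apply Continuous.mul
  · exact Complex.continuous_exp.comp ((((Complex.continuous_ofReal.add continuous_const).pow 2).neg))
  · exact S.continuous.comp Complex.continuous_ofReal

lemma integrable_bound (r : ℝ) : Integrable (fun y : ℝ => Real.exp (-(y + r)^2 / 4)) := by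
  have h := (integrable_exp_neg_mul_sq (by norm_num : (0:ℝ) < 1/4)).comp_add_right r
  apply h.congr
  filter_upwards with y
  congr 1
  ring

lemma integrable_aux (c : ℂ) (S : Polynomial ℂ) :
    Integrable (fun y : ℝ => Complex.exp (-((y:ℂ) + c)^2) * S.eval (y:ℂ)) := by
  obtain ⟨C, hC0, hC⟩ := key_bound c S
  apply Integrable.mono' ((integrable_bound c.re).const_mul C)
  · exact (cont_aux c S).aestronglyMeasurable
  · filter_upwards with y
    exact hC y

lemma tendsto_top_aux (c : ℂ) (S : Polynomial ℂ) :
    Tendsto (fun y : ℝ => Complex.exp (-((y:ℂ) + c)^2) * S.eval (y:ℂ)) atTop (nhds 0) := by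
  obtain ⟨C, hC0, hC⟩ := key_bound c S
  apply squeeze_zero_norm (fun y => hC y)
  have h1 : Tendsto (fun y : ℝ => -(y + c.re)^2/4) atTop atBot := by
    apply Tendsto.atBot_div_const (by norm_num)
    apply tendsto_neg_atTop_atBot.comp
    exact (tendsto_pow_atTop (by norm_num)).comp (tendsto_atTop_add_const_right _ _ tendsto_id)
  have := (Real.tendsto_exp_atBot).comp h1
  simpa using this.const_mul C

lemma tendsto_bot_aux (c : ℂ) (S : Polynomial ℂ) :
    Tendsto (fun y : ℝ => Complex.exp (-((y:ℂ) + c)^2) * S.eval (y:ℂ)) atBot (nhds 0) := by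
  obtain ⟨C, hC0, hC⟩ := key_bound c S
  apply squeeze_zero_norm (fun y => hC y)
  have h1 : Tendsto (fun y : ℝ => -(y + c.re)^2/4) atBot atBot := by
    apply Tendsto.atBot_div_const (by norm_num)
    apply tendsto_neg_atTop_atBot.comp
    have habs : Tendsto (fun y : ℝ => |y + c.re|) atBot atTop :=
      tendsto_abs_atBot_atTop.comp (tendsto_atBot_add_const_right _ _ tendsto_id)
    have := (tendsto_pow_atTop (two_ne_zero)).comp habs
    apply this.congr
    intro y
    simp [_root_.sq_abs]
  have := (Real.tendsto_exp_atBot).comp h1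
  simpa using this.const_mul C

/-- FTC: integral over ℝ of a derivative vanishing at ±∞ is 0. -/
lemma integral_deriv_zero {f f' : ℝ → ℂ} (hd : ∀ y, HasDerivAt f (f' y) y)
    (hi : Integrable f') (ht : Tendsto f atTop (nhds 0)) (hb : Tendsto f atBot (nhds 0)) :
    ∫ y : ℝ, f' y = 0 := by
  have h1 : ∫ y in Set.Ioi (0:ℝ), f' y = 0 - f 0 :=
    integral_Ioi_of_hasDerivAt_of_tendsto' (fun x _ => hd x) hi.integrableOn ht
  have h2 : ∫ y in Set.Iic (0:ℝ), f' y = f 0 - 0 :=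
    integral_Iic_of_hasDerivAt_of_tendsto' (fun x _ => hd x) hi.integrableOn hb
  rw [← intervalIntegral.integral_Iic_add_Ioi (b := (0:ℝ)) hi.integrableOn hi.integrableOn, h1, h2]
  ring


lemma hasDerivAt_E (c : ℂ) (y : ℝ) :
    HasDerivAt (fun y : ℝ => Complex.exp (-((y:ℂ) + c)^2))
      (Complex.exp (-((y:ℂ) + c)^2) * (-2 * ((y:ℂ) + c))) y := by
  have h1 : HasDerivAt (fun z : ℂ => Complex.exp (-(z + c)^2))
      (Complex.exp (-((y:ℂ) + c)^2) * (-2 * ((y:ℂ) + c))) (y : ℂ) := by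
    have hin : HasDerivAt (fun z : ℂ => -(z + c)^2) (-2 * ((y:ℂ) + c)) (y:ℂ) := by
      have := (((hasDerivAt_id ((y:ℂ))).add_const c).pow 2).neg
      simpa [Pi.neg_def, Pi.pow_def] using this
    simpa [mul_comm] using hin.cexp
  exact h1.comp_ofReal

lemma hasDerivAt_P (S : Polynomial ℂ) (y : ℝ) :
    HasDerivAt (fun y : ℝ => S.eval ((y:ℂ)))
      ((Polynomial.derivative S).eval ((y:ℂ))) y :=
  (S.hasDerivAt ((y:ℂ))).comp_ofReal

lemma hasDerivAt_W (c : ℂ) (S : Polynomial ℂ) (y : ℝ) :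
    HasDerivAt (fun y : ℝ => Complex.exp (-((y:ℂ) + c)^2) * S.eval (y:ℂ))
      (Complex.exp (-((y:ℂ) + c)^2) *
        ((-2 * (Polynomial.X + Polynomial.C c) * S + Polynomial.derivative S).eval (y:ℂ))) y := by
  have := (hasDerivAt_E c y).mul (hasDerivAt_P S y)
  apply this.congr_deriv
  simp only [Polynomial.eval_add, Polynomial.eval_mul, Polynomial.eval_X, Polynomial.eval_C,
    Polynomial.eval_neg, Polynomial.eval_ofNat]
  ring

lemma integral_W' (c : ℂ) (S : Polynomial ℂ) :
    ∫ y : ℝ, Complex.exp (-((y:ℂ) + c)^2) *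
      ((-2 * (Polynomial.X + Polynomial.C c) * S + Polynomial.derivative S).eval (y:ℂ)) = 0 :=
  integral_deriv_zero (hasDerivAt_W c S) (integrable_aux c _) (tendsto_top_aux c S)
    (tendsto_bot_aux c S)

lemma integral_E (c : ℂ) :
    ∫ y : ℝ, Complex.exp (-((y:ℂ) + c)^2) = (Real.sqrt π : ℂ) := by
  have h := integral_cexp_quadratic (b := -1) (by norm_num) (-2*c) (-c^2)
  have heq : ∀ y : ℝ, Complex.exp (-((y:ℂ) + c)^2) =
      Complex.exp (-1 * (y:ℂ)^2 + (-2*c) * y + (-c^2)) := by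
    intro y; congr 1; ring
  rw [funext heq, h]
  have : (-2*c)^2 / (4 * (-1:ℂ)) = -c^2 := by ring
  rw [this]
  simp only [sub_self, Complex.exp_zero, mul_one, neg_neg]
  rw [div_one, show ((1:ℂ)/2) = ((1/2 : ℝ) : ℂ) by norm_num,
    ← Complex.ofReal_cpow (le_of_lt Real.pi_pos),
    show π ^ (1/2 : ℝ) = Real.sqrt π from (Real.sqrt_eq_rpow π).symm]


def lagC (δ n : ℕ) (t : ℂ) : ℂ :=
  ∑ i ∈ Finset.range (n + 1),
    (-1 : ℂ) ^ i * ((n + δ).choose (n - i) : ℂ) * t ^ i / (i.factorial : ℂ)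

lemma lagC_zero (δ : ℕ) (t : ℂ) : lagC δ 0 t = 1 := by
  simp [lagC]

lemma lag_pascal (n : ℕ) (t : ℂ) :
    lagC 1 (n + 1) t = lagC 0 (n + 1) t + lagC 1 n t := by
  unfold lagC
  calc ∑ i ∈ Finset.range (n + 2), (-1:ℂ)^i * (((n+1)+1).choose ((n+1)-i) : ℂ) * t^i / (i.factorial : ℂ)
      = (∑ i ∈ Finset.range (n + 1), (-1:ℂ)^i * (((n+1)+1).choose ((n+1)-i) : ℂ) * t^i / (i.factorial : ℂ))
        + (-1:ℂ)^(n+1) * (((n+1)+1).choose ((n+1)-(n+1)) : ℂ) * t^(n+1) / ((n+1).factorial : ℂ) :=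
        Finset.sum_range_succ _ _
    _ = (∑ i ∈ Finset.range (n + 1),
          ((-1:ℂ)^i * (((n+1)+0).choose ((n+1)-i) : ℂ) * t^i / (i.factorial : ℂ)
           + (-1:ℂ)^i * ((n+1).choose (n-i) : ℂ) * t^i / (i.factorial : ℂ)))
        + (-1:ℂ)^(n+1) * (((n+1)+0).choose ((n+1)-(n+1)) : ℂ) * t^(n+1) / ((n+1).factorial : ℂ) := by
        congr 1
        · apply Finset.sum_congr rfl
          intro i hi
          rw [Finset.mem_range] at hi
          have hle : i ≤ n := Nat.lt_succ_iff.mp hi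
          have hch : ((n+1)+1).choose ((n+1)-i) = ((n+1)+0).choose ((n+1)-i) + (n+1).choose (n-i) := by
            have h1 : (n+1) - i = (n - i) + 1 := by omega
            rw [h1, add_zero]
            exact (Nat.choose_succ_succ (n+1) (n-i)).trans (Nat.add_comm _ _)
          rw [hch]
          push_cast
          ring
        · simp
    _ = _ := by
        rw [Finset.sum_add_distrib]
        rw [add_right_comm]
        congr 1
        exact (Finset.sum_range_succ _ _).symm

lemma lag_three_term (n : ℕ) (t : ℂ) :
    ((n : ℂ) + 1) * lagC 0 (n + 1) t = ((n : ℂ) + 1) * lagC 0 n t - t * lagC 1 n t := by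
  have hf : -t * lagC 1 n t =
      ∑ j ∈ Finset.range (n + 2),
        (j : ℂ) * ((-1:ℂ)^j * ((n+1).choose ((n+1)-j) : ℂ) * t^j / (j.factorial : ℂ)) := by
    rw [Finset.sum_range_succ']
    simp only [Nat.cast_zero, zero_mul, add_zero]
    unfold lagC
    rw [Finset.mul_sum]
    apply Finset.sum_congr rfl
    intro i hi
    rw [Finset.mem_range] at hi
    have hle : i ≤ n := Nat.lt_succ_iff.mp hi
    have h1 : (n+1) - (i+1) = n - i := by omega
    rw [h1]
    have hfac : (((i+1).factorial : ℂ)) = ((i:ℂ)+1) * (i.factorial : ℂ) := by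
      rw [Nat.factorial_succ]; push_cast; ring
    rw [hfac]
    have hfacpos : ((i.factorial : ℂ)) ≠ 0 := by
      exact_mod_cast Nat.cast_ne_zero.mpr (Nat.factorial_ne_zero i)
    have h2 : ((i:ℂ)+1) ≠ 0 := Nat.cast_add_one_ne_zero i
    push_cast
    field_simp
    ring
  have key : ((n : ℂ) + 1) * lagC 0 (n + 1) t - (-t * lagC 1 n t) = ((n : ℂ) + 1) * lagC 0 n t := by
    rw [hf]
    unfold lagC
    rw [Finset.mul_sum, Finset.mul_sum]
    rw [Finset.sum_range_succ (n := n + 1), Finset.sum_range_succ (n := n + 1), add_sub_add_comm]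
    have htop : ((n:ℂ)+1) * ((-1:ℂ)^(n+1) * (((n+1)+0).choose ((n+1)-(n+1)) : ℂ) * t^(n+1) / (((n+1)).factorial : ℂ))
        - ((n+1 : ℕ) : ℂ) * ((-1:ℂ)^(n+1) * (((n+1)).choose ((n+1)-(n+1)) : ℂ) * t^(n+1) / (((n+1)).factorial : ℂ)) = 0 := by
      push_cast
      ring
    rw [htop, add_zero, ← Finset.sum_sub_distrib]
    apply Finset.sum_congr rfl
    intro i hi
    rw [Finset.mem_range] at hi
    have hle : i ≤ n := Nat.lt_succ_iff.mp hi
    have hnat : (n+1) * ((n+1).choose ((n+1)-i)) = (n+1) * (n.choose (n-i)) + i * ((n+1).choose ((n+1)-i)) := by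
      have hsplit : (n+1) * ((n+1).choose ((n+1)-i)) = ((n+1-i) + i) * ((n+1).choose ((n+1)-i)) := by
        congr 1
        omega
      rw [hsplit, add_mul]
      congr 1
      have h2 : (n+1-i) = (n-i) + 1 := by omega
      rw [h2]
      have h3 := Nat.add_one_mul_choose_eq n (n - i)
      rw [mul_comm]
      exact h3.symm
    have hcast := congrArg (Nat.cast : ℕ → ℂ) hnat
    push_cast at hcast
    have hfacpos : ((i.factorial : ℂ)) ≠ 0 := by
      exact_mod_cast Nat.cast_ne_zero.mpr (Nat.factorial_ne_zero i)
    simp only [add_zero, ← mul_div_assoc, ← sub_div]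
    rw [div_eq_div_iff hfacpos hfacpos]
    linear_combination (((-1:ℂ)^i * t^i) * (i.factorial : ℂ)) * hcast
  linear_combination key


/-- Complex Hermite polynomial. -/
def HpC (n : ℕ) : Polynomial ℂ := (Hp n).map (algebraMap ℝ ℂ)

lemma HpC_zero : HpC 0 = 1 := by simp [HpC, Hp]

lemma HpC_succ (n : ℕ) : HpC (n + 1) =
    Polynomial.C 2 * Polynomial.X * HpC n - Polynomial.derivative (HpC n) := by
  unfold HpC
  rw [show Hp (n+1) = Polynomial.C 2 * Polynomial.X * Hp n - Polynomial.derivative (Hp n) from rfl]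
  simp [Polynomial.derivative_map, Polynomial.map_mul]

lemma HpC_deriv (n : ℕ) :
    Polynomial.derivative (HpC (n + 1)) = Polynomial.C ((2:ℂ) * ((n:ℂ) + 1)) * HpC n := by
  unfold HpC
  rw [Polynomial.derivative_map, Hp_deriv n, Polynomial.map_mul, Polynomial.map_C]
  congr 1
  simp

/-- Shift of a polynomial. -/
def shf (a : ℂ) (P : Polynomial ℂ) : Polynomial ℂ := P.comp (Polynomial.X + Polynomial.C a)

lemma shf_eval (a : ℂ) (P : Polynomial ℂ) (z : ℂ) : (shf a P).eval z = P.eval (z + a) := by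
  simp [shf]

lemma shf_deriv (a : ℂ) (P : Polynomial ℂ) :
    Polynomial.derivative (shf a P) = shf a (Polynomial.derivative P) := by
  simp [shf, Polynomial.derivative_comp]

lemma integral_W2 (c : ℂ) (S : Polynomial ℂ) :
    ∫ y : ℝ, Complex.exp (-((y:ℂ) + c)^2) *
      ((2 * (Polynomial.X + Polynomial.C c) * S - Polynomial.derivative S).eval (y:ℂ)) = 0 := by
  have h : (fun y : ℝ => Complex.exp (-((y:ℂ) + c)^2) *
      ((2 * (Polynomial.X + Polynomial.C c) * S - Polynomial.derivative S).eval (y:ℂ)))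
      = fun y : ℝ => -(Complex.exp (-((y:ℂ) + c)^2) *
      ((-2 * (Polynomial.X + Polynomial.C c) * S + Polynomial.derivative S).eval (y:ℂ))) := by
    funext y
    simp only [Polynomial.eval_sub, Polynomial.eval_add, Polynomial.eval_mul, Polynomial.eval_neg,
      Polynomial.eval_X, Polynomial.eval_C, Polynomial.eval_ofNat]
    ring
  rw [h, integral_neg, integral_W', neg_zero]

def Gint (n : ℕ) (c a b : ℂ) : ℂ :=
  ∫ y : ℝ, Complex.exp (-((y:ℂ) + c)^2) * (HpC n).eval ((y:ℂ) + a) * (HpC n).eval ((y:ℂ) + b)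

def Jint (n : ℕ) (c a b : ℂ) : ℂ :=
  ∫ y : ℝ, Complex.exp (-((y:ℂ) + c)^2) * (HpC (n+1)).eval ((y:ℂ) + b) * (HpC n).eval ((y:ℂ) + a)

lemma integrable_EPQ (c a b : ℂ) (P Q : Polynomial ℂ) :
    Integrable (fun y : ℝ =>
      Complex.exp (-((y:ℂ) + c)^2) * P.eval ((y:ℂ) + a) * Q.eval ((y:ℂ) + b)) := by
  have h := integrable_aux c (shf a P * shf b Q)
  apply h.congr
  filter_upwards with y
  simp [shf_eval, mul_assoc]

lemma integrable_EP (c : ℂ) (S : Polynomial ℂ) :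
    Integrable (fun y : ℝ => Complex.exp (-((y:ℂ) + c)^2) * S.eval (y:ℂ)) :=
  integrable_aux c S

lemma integral_three (f g h : ℝ → ℂ) (hf : Integrable f) (hg : Integrable g) (hh : Integrable h) :
    ∫ y : ℝ, (f y + (g y + h y)) = (∫ y : ℝ, f y) + ((∫ y : ℝ, g y) + (∫ y : ℝ, h y)) := by
  have h2 : Integrable (fun y : ℝ => g y + h y) := by exact hg.add hh
  rw [integral_add hf h2, integral_add hg hh]

lemma Gint_zero (c a b : ℂ) : Gint 0 c a b = (Real.sqrt π : ℂ) := by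
  unfold Gint
  rw [show (∫ y : ℝ, Complex.exp (-((y:ℂ) + c)^2) * (HpC 0).eval ((y:ℂ) + a) * (HpC 0).eval ((y:ℂ) + b))
    = ∫ y : ℝ, Complex.exp (-((y:ℂ) + c)^2) from by simp [HpC_zero]]
  exact integral_E c

lemma R1 (n : ℕ) (c a b : ℂ) :
    Gint (n+1) c a b = 2*(a-c) * Jint n c a b + 2*((n:ℂ)+1) * Gint n c a b := by
  set S : Polynomial ℂ := shf a (HpC n) * shf b (HpC (n+1)) with hS
  have hpt : (fun y : ℝ => Complex.exp (-((y:ℂ) + c)^2) * (HpC (n+1)).eval ((y:ℂ) + a) * (HpC (n+1)).eval ((y:ℂ) + b))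
      = fun y : ℝ =>
        ((2*(a-c)) * (Complex.exp (-((y:ℂ) + c)^2) * (HpC (n+1)).eval ((y:ℂ) + b) * (HpC n).eval ((y:ℂ) + a))
        + ((2*((n:ℂ)+1)) * (Complex.exp (-((y:ℂ) + c)^2) * (HpC n).eval ((y:ℂ) + a) * (HpC n).eval ((y:ℂ) + b))
          + Complex.exp (-((y:ℂ) + c)^2) *
            ((2 * (Polynomial.X + Polynomial.C c) * S - Polynomial.derivative S).eval (y:ℂ)))) := by
    funext y
    have e1 : (HpC (n+1)).eval ((y:ℂ) + a)
        = 2*((y:ℂ)+a)*(HpC n).eval ((y:ℂ)+a) - (Polynomial.derivative (HpC n)).eval ((y:ℂ)+a) := by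
      rw [HpC_succ]; simp
    have eS : ((2 * (Polynomial.X + Polynomial.C c) * S - Polynomial.derivative S).eval (y:ℂ))
        = 2*((y:ℂ)+c) * ((HpC n).eval ((y:ℂ)+a) * (HpC (n+1)).eval ((y:ℂ)+b))
          - ((Polynomial.derivative (HpC n)).eval ((y:ℂ)+a) * (HpC (n+1)).eval ((y:ℂ)+b)
             + (HpC n).eval ((y:ℂ)+a) * ((2:ℂ)*((n:ℂ)+1) * (HpC n).eval ((y:ℂ)+b))) := by
      rw [hS]
      simp only [Polynomial.derivative_mul, shf_deriv, Polynomial.eval_sub, Polynomial.eval_add,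
        Polynomial.eval_mul, Polynomial.eval_X, Polynomial.eval_C, shf_eval, HpC_deriv,
        Polynomial.eval_ofNat]
      try ring
    rw [e1, eS]
    try ring
  unfold Gint Jint
  rw [hpt]
  rw [integral_three _ _ _
    ((integrable_EPQ c b a (HpC (n+1)) (HpC n)).const_mul _)
    ((integrable_EPQ c a b (HpC n) (HpC n)).const_mul _)
    (integrable_aux c (2 * (Polynomial.X + Polynomial.C c) * S - Polynomial.derivative S))]
  rw [integral_W2, integral_const_mul, integral_const_mul, add_zero]

lemma R2 (n : ℕ) (c a b : ℂ) :
    Jint (n+1) c a b = 2*(b-c) * Gint (n+1) c a b + 2*((n:ℂ)+1) * Jint n c a b := by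
  set S : Polynomial ℂ := shf b (HpC (n+1)) * shf a (HpC (n+1)) with hS
  have hpt : (fun y : ℝ => Complex.exp (-((y:ℂ) + c)^2) * (HpC (n+2)).eval ((y:ℂ) + b) * (HpC (n+1)).eval ((y:ℂ) + a))
      = fun y : ℝ =>
        ((2*(b-c)) * (Complex.exp (-((y:ℂ) + c)^2) * (HpC (n+1)).eval ((y:ℂ) + a) * (HpC (n+1)).eval ((y:ℂ) + b))
        + ((2*((n:ℂ)+1)) * (Complex.exp (-((y:ℂ) + c)^2) * (HpC (n+1)).eval ((y:ℂ) + b) * (HpC n).eval ((y:ℂ) + a))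
          + Complex.exp (-((y:ℂ) + c)^2) *
            ((2 * (Polynomial.X + Polynomial.C c) * S - Polynomial.derivative S).eval (y:ℂ)))) := by
    funext y
    have e1 : (HpC (n+2)).eval ((y:ℂ) + b)
        = 2*((y:ℂ)+b)*(HpC (n+1)).eval ((y:ℂ)+b) - (Polynomial.derivative (HpC (n+1))).eval ((y:ℂ)+b) := by
      rw [show HpC (n+2) = Polynomial.C 2 * Polynomial.X * HpC (n+1) - Polynomial.derivative (HpC (n+1)) from HpC_succ (n+1)]
      simp
    have eS : ((2 * (Polynomial.X + Polynomial.C c) * S - Polynomial.derivative S).eval (y:ℂ))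
        = 2*((y:ℂ)+c) * ((HpC (n+1)).eval ((y:ℂ)+b) * (HpC (n+1)).eval ((y:ℂ)+a))
          - (((2:ℂ)*((n:ℂ)+1) * (HpC n).eval ((y:ℂ)+b)) * (HpC (n+1)).eval ((y:ℂ)+a)
             + (HpC (n+1)).eval ((y:ℂ)+b) * ((2:ℂ)*((n:ℂ)+1) * (HpC n).eval ((y:ℂ)+a))) := by
      rw [hS]
      simp only [Polynomial.derivative_mul, shf_deriv, Polynomial.eval_sub, Polynomial.eval_add,
        Polynomial.eval_mul, Polynomial.eval_X, Polynomial.eval_C, shf_eval, HpC_deriv,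
        Polynomial.eval_ofNat]
      try ring
    rw [e1, eS]
    have e2 : (Polynomial.derivative (HpC (n+1))).eval ((y:ℂ)+b)
        = (2:ℂ)*((n:ℂ)+1) * (HpC n).eval ((y:ℂ)+b) := by
      rw [HpC_deriv]; simp
    rw [e2]
    try ring
  unfold Jint Gint
  rw [hpt]
  rw [integral_three _ _ _
    ((integrable_EPQ c a b (HpC (n+1)) (HpC (n+1))).const_mul _)
    ((integrable_EPQ c b a (HpC (n+1)) (HpC n)).const_mul _)
    (integrable_aux c (2 * (Polynomial.X + Polynomial.C c) * S - Polynomial.derivative S))]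
  rw [integral_W2, integral_const_mul, integral_const_mul, add_zero]

lemma Jint_zero (c a b : ℂ) : Jint 0 c a b = 2*(b-c) * (Real.sqrt π : ℂ) := by
  unfold Jint
  have hH1 : HpC 1 = Polynomial.C 2 * Polynomial.X := by
    rw [HpC_succ 0, HpC_zero]
    simp
  have hpt : (fun y : ℝ => Complex.exp (-((y:ℂ) + c)^2) * (HpC 1).eval ((y:ℂ) + b) * (HpC 0).eval ((y:ℂ) + a))
      = fun y : ℝ =>
        ((2*(b-c)) * Complex.exp (-((y:ℂ) + c)^2)
          + Complex.exp (-((y:ℂ) + c)^2) *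
            ((2 * (Polynomial.X + Polynomial.C c) * 1 - Polynomial.derivative 1).eval (y:ℂ))) := by
    funext y
    rw [hH1, HpC_zero]
    simp only [Polynomial.eval_mul, Polynomial.eval_C, Polynomial.eval_X, Polynomial.eval_one,
      Polynomial.derivative_one, Polynomial.eval_sub, Polynomial.eval_add, Polynomial.eval_zero,
      Polynomial.eval_ofNat]
    ring
  rw [hpt]
  have hE : Integrable (fun y : ℝ => Complex.exp (-((y:ℂ) + c)^2)) := by
    have := integrable_aux c 1
    apply this.congr
    filter_upwards with y
    simp
  rw [integral_add (hE.const_mul _) (integrable_aux c _)]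
  rw [integral_W2, integral_const_mul, integral_E, add_zero]

theorem GJval (n : ℕ) : ∀ c a b : ℂ,
    Gint n c a b = 2^n * (n.factorial : ℂ) * (Real.sqrt π : ℂ) * lagC 0 n (-2*(a-c)*(b-c))
    ∧ Jint n c a b = 2^(n+1) * (n.factorial : ℂ) * (Real.sqrt π : ℂ) * (b-c) * lagC 1 n (-2*(a-c)*(b-c)) := by
  induction n with
  | zero =>
    intro c a b
    constructor
    · rw [Gint_zero, lagC_zero]; simp [Nat.factorial]
    · rw [Jint_zero, lagC_zero]; simp [Nat.factorial]; ring
  | succ n ih =>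
    intro c a b
    obtain ⟨hG, hJ⟩ := ih c a b
    have hfac : (((n+1).factorial : ℂ)) = ((n:ℂ)+1) * (n.factorial : ℂ) := by
      rw [Nat.factorial_succ]; push_cast; ring
    have hGs : Gint (n+1) c a b
        = 2^(n+1) * (((n+1).factorial : ℕ) : ℂ) * (Real.sqrt π : ℂ) * lagC 0 (n+1) (-2*(a-c)*(b-c)) := by
      rw [R1, hG, hJ, hfac]
      linear_combination (-(2^(n+1) * (n.factorial : ℂ) * (Real.sqrt π : ℂ))) * lag_three_term n (-2*(a-c)*(b-c))
    refine ⟨hGs, ?_⟩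
    rw [R2, hGs, hJ, hfac]
    linear_combination (-(2^(n+2) * ((n:ℂ)+1) * (n.factorial : ℂ) * (Real.sqrt π : ℂ) * (b-c))) * lag_pascal n (-2*(a-c)*(b-c))


lemma Gval (n : ℕ) (c a b : ℂ) :
    Gint n c a b = 2^n * (n.factorial : ℂ) * (Real.sqrt π : ℂ) * lagC 0 n (-2*(a-c)*(b-c)) :=
  (GJval n c a b).1

lemma HpC_eval (n : ℕ) (w : ℝ) : ((( Hp n).eval w : ℝ) : ℂ) = (HpC n).eval ((w : ℝ) : ℂ) := by
  rw [HpC, Polynomial.eval_map, show ((w : ℝ) : ℂ) = algebraMap ℝ ℂ w from rfl,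
    Polynomial.eval₂_at_apply]
  rfl

lemma lagC_ofReal (δ n : ℕ) (y : ℝ) : lagC δ n ((y:ℝ) : ℂ) = ((laguerre δ n y : ℝ) : ℂ) := by
  unfold lagC laguerre
  push_cast
  rfl

lemma cC_sq (n : ℕ) :
    (((2 : ℝ) ^ n * (n.factorial : ℝ) * Real.sqrt π) ^ (-(1 : ℝ) / 2))^2
      * ((2:ℝ)^n * (n.factorial : ℝ) * Real.sqrt π) = 1 := by
  set A : ℝ := (2:ℝ)^n * (n.factorial : ℝ) * Real.sqrt π with hA
  have hApos : 0 < A := by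
    rw [hA]
    have : 0 < Real.sqrt π := Real.sqrt_pos.mpr Real.pi_pos
    positivity
  have h1 : (A ^ (-(1:ℝ)/2))^2 = A ^ (-(1:ℝ)) := by
    rw [← Real.rpow_natCast (A ^ (-(1:ℝ)/2)) 2, ← Real.rpow_mul hApos.le]
    norm_num
  rw [h1, Real.rpow_neg_one]
  field_simp

/-- The key one-dimensional integral. -/
lemma onedim (n : ℕ) (u v : ℝ) :
    ∫ t : ℝ, Complex.exp (Complex.I * ((u * t : ℝ) : ℂ))
        * ((hermiteFun n (t + 1/2 * v) : ℝ) : ℂ) * ((hermiteFun n (t - 1/2 * v) : ℝ) : ℂ)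
      = ((laguerre 0 n ((u^2 + v^2)/2) * Real.exp (-(u^2 + v^2)/4) : ℝ) : ℂ) := by
  set cC : ℝ := ((2 : ℝ) ^ n * (n.factorial : ℝ) * Real.sqrt π) ^ (-(1 : ℝ) / 2) with hcC
  set c0 : ℂ := -(Complex.I * (u:ℂ))/2 with hc0
  set av : ℂ := ((1/2 * v : ℝ) : ℂ) with hav
  have hpt : (fun t : ℝ => Complex.exp (Complex.I * ((u * t : ℝ) : ℂ))
        * ((hermiteFun n (t + 1/2 * v) : ℝ) : ℂ) * ((hermiteFun n (t - 1/2 * v) : ℝ) : ℂ))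
      = fun t : ℝ => ((cC^2 * Real.exp (-(u^2 + v^2)/4) : ℝ) : ℂ) *
          (Complex.exp (-((t:ℂ) + c0)^2) * (HpC n).eval ((t:ℂ) + av) * (HpC n).eval ((t:ℂ) + (-av))) := by
    funext t
    have hw1 : ((hermiteFun n (t + 1/2 * v) : ℝ) : ℂ)
        = (cC : ℂ) * Complex.exp ((-(t + 1/2*v)^2/2 : ℝ) : ℂ) * (HpC n).eval ((t:ℂ) + av) := by
      rw [hermiteFun, hermitePoly_eq, ← hcC, hav]
      push_cast [HpC_eval]
      ring_nf
    have hw2 : ((hermiteFun n (t - 1/2 * v) : ℝ) : ℂ)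
        = (cC : ℂ) * Complex.exp ((-(t - 1/2*v)^2/2 : ℝ) : ℂ) * (HpC n).eval ((t:ℂ) + (-av)) := by
      rw [hermiteFun, hermitePoly_eq, ← hcC, hav]
      push_cast [HpC_eval]
      ring_nf
    rw [hw1, hw2]
    have hexp : Complex.exp (Complex.I * ((u * t : ℝ) : ℂ))
          * Complex.exp ((-(t + 1/2*v)^2/2 : ℝ) : ℂ) * Complex.exp ((-(t - 1/2*v)^2/2 : ℝ) : ℂ)
        = Complex.exp ((-(u^2 + v^2)/4 : ℝ) : ℂ) * Complex.exp (-((t:ℂ) + c0)^2) := by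
      rw [← Complex.exp_add, ← Complex.exp_add, ← Complex.exp_add]
      congr 1
      rw [hc0]
      push_cast
      have hI : Complex.I^2 = -1 := Complex.I_sq
      ring_nf
      rw [hI]
      ring
    conv_rhs => rw [Complex.ofReal_mul, Complex.ofReal_exp, Complex.ofReal_pow]
    linear_combination ((cC:ℂ)^2 * (HpC n).eval ((t:ℂ) + av) * (HpC n).eval ((t:ℂ) + (-av))) * hexp
  rw [hpt, MeasureTheory.integral_const_mul]
  have hG := Gval n c0 av (-av)
  rw [show (∫ t : ℝ, Complex.exp (-((t:ℂ) + c0)^2) * (HpC n).eval ((t:ℂ) + av) * (HpC n).eval ((t:ℂ) + (-av))) = Gint n c0 av (-av) from rfl, hG]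
  have harg : -2*((av - c0)*((-av) - c0)) = (((u^2 + v^2)/2 : ℝ) : ℂ) := by
    rw [hav, hc0]
    push_cast
    have hI : Complex.I^2 = -1 := Complex.I_sq
    ring_nf
    rw [hI]
    ring
  rw [show -2*(av - c0)*((-av) - c0) = -2*((av - c0)*((-av) - c0)) by ring, harg, lagC_ofReal]
  have hfin := cC_sq n
  rw [← hcC] at hfin
  have h1 : ((cC : ℂ))^2 * ((2:ℂ)^n * ((n.factorial : ℕ) : ℂ) * ((Real.sqrt π : ℝ) : ℂ)) = 1 := by
    have h2 := congrArg (Complex.ofReal) hfin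
    push_cast at h2
    convert h2 using 2
  rw [Complex.ofReal_mul, Complex.ofReal_mul, Complex.ofReal_pow]
  linear_combination (((Real.exp (-(u^2+v^2)/4) : ℝ) : ℂ)
    * ((laguerre 0 n ((u^2+v^2)/2) : ℝ) : ℂ)) * h1


end Aux

/-- Laguerre representation of the diagonal special Hermite functions. -/
theorem specialHermite_diag_laguerre {d : ℕ} (β : Fin d → ℕ)
    (x ξ : Fin d → ℝ) :
    specialHermite β β (x, ξ) =
      (((((2 * π : ℝ)) ^ d)⁻¹ : ℝ) : ℂ) *
        ((∏ j, laguerre 0 (β j) ((x j ^ 2 + ξ j ^ 2) / 2) *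
            Real.exp (-(x j ^ 2 + ξ j ^ 2) / 4) : ℝ) : ℂ) := by
  unfold specialHermite ambiguity
  congr 1
  have hint : (fun y : Fin d → ℝ => Complex.exp (-Complex.I * (dotp (-x) y : ℝ)) *
      hermiteFunD β (y + (1 / 2 : ℝ) • ξ) * (starRingEnd ℂ) (hermiteFunD β (y - (1 / 2 : ℝ) • ξ)))
      = fun y : Fin d → ℝ => ∏ j, (Complex.exp (Complex.I * ((x j * y j : ℝ) : ℂ))
        * ((hermiteFun (β j) (y j + 1/2 * ξ j) : ℝ) : ℂ)
        * ((hermiteFun (β j) (y j - 1/2 * ξ j) : ℝ) : ℂ)) := by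
    funext y
    rw [hermiteFunD, hermiteFunD, Complex.conj_ofReal]
    have hexp : Complex.exp (-Complex.I * (dotp (-x) y : ℝ))
        = ∏ j, Complex.exp (Complex.I * ((x j * y j : ℝ) : ℂ)) := by
      rw [← Complex.exp_sum]
      congr 1
      rw [dotp]
      push_cast
      rw [Finset.mul_sum]
      apply Finset.sum_congr rfl
      intro j _
      simp
      try ring
    rw [hexp]
    rw [Complex.ofReal_prod, Complex.ofReal_prod]
    rw [← Finset.prod_mul_distrib, ← Finset.prod_mul_distrib]
    apply Finset.prod_congr rfl
    intro j _
    have h1 : (y + (1 / 2 : ℝ) • ξ) j = y j + 1/2 * ξ j := by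
      simp
    have h2 : (y - (1 / 2 : ℝ) • ξ) j = y j - 1/2 * ξ j := by
      simp
    rw [h1, h2]
  rw [hint]
  rw [MeasureTheory.integral_fintype_prod_volume_eq_prod
    (fun j => fun t : ℝ => (Complex.exp (Complex.I * ((x j * t : ℝ) : ℂ))
        * ((hermiteFun (β j) (t + 1/2 * ξ j) : ℝ) : ℂ)
        * ((hermiteFun (β j) (t - 1/2 * ξ j) : ℝ) : ℂ)))]
  rw [Complex.ofReal_prod]
  apply Finset.prod_congr rfl
  intro j _
  exact onedim (β j) (x j) (ξ j)

end
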